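/- arXiv:1010.3562 — 6 statements merged into one kernel-verified Lean document; each statement's English description precedes it below -/
import Mathlib

section
/- Let X and Y be locally compact Hausdorff topological spaces. Then the algebras C₀(X, ℂ) and C₀(Y, ℂ) are isomorphic as ℂ-algebras if and only if X and Y are homeomorphic. -/
/-!
A nonzero character `χ` of `C₀(X, 𝕜)` is evaluation at a point: through the algebra map from
`C(OnePoint X, 𝕜)` to the unitization of `C₀(X, 𝕜)`, `χ` extends to a character of
`C(OnePoint X, 𝕜)`, which is evaluation at a point of the compact space `OnePoint X`, and that
point is not `∞` because `χ ≠ 0`. Hence an isomorphism `Φ : C₀(X, ℂ) ≃ C₀(Y, ℂ)` has the form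
`Φ f = f ∘ t`, and `Φ⁻¹ g = g ∘ s`. Urysohn's lemma in `C₀` shows that `C₀` functions separate the
points of `X` and determine its topology, so `t` and `s` are continuous and mutually inverse.
Conversely, composition with a homeomorphism is an isomorphism.
-/

open ZeroAtInfty Filter Topology OnePoint

namespace ZeroAtInftyContinuousMap

section OnePoint

variable {X R : Type*} [TopologicalSpace X] [TopologicalSpace R]

@[simps]
def restrictOnePoint [AddGroup R] [IsTopologicalAddGroup R] (g : C(OnePoint X, R)) :
    C₀(X, R) where
  toFun x := g x - g ∞
  continuous_toFun := (g.continuous.comp continuous_coe).sub continuous_const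
  zero_at_infty' := by
    simpa using ((g.continuous.tendsto ∞).comp
      (tendsto_coe_infty.mono_left cocompact_le_coclosedCompact)).sub_const (g ∞)

def toUnitization [CommRing R] [IsTopologicalRing R] :
    C(OnePoint X, R) →ₐ[R] Unitization R C₀(X, R) where
  toFun g := Unitization.inl (g ∞) + (restrictOnePoint g : Unitization R C₀(X, R))
  map_one' := by ext <;> simp
  map_zero' := by ext <;> simp
  map_add' g h := by ext <;> simp [sub_add_sub_comm]
  map_mul' g h := by
    ext
    · simp
    · simp; ring
  commutes' r := by ext <;> simp [Unitization.algebraMap_eq_inl]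

def toOnePoint [Zero R] [R1Space X] (f : C₀(X, R)) : C(OnePoint X, R) :=
  continuousMapMk f 0 (by simpa using zero_at_infty f)

@[simp]
lemma toOnePoint_coe [Zero R] [R1Space X] (f : C₀(X, R)) (x : X) : toOnePoint f x = f x := rfl

@[simp]
lemma toOnePoint_infty [Zero R] [R1Space X] (f : C₀(X, R)) : toOnePoint f ∞ = 0 := rfl

@[simp]
lemma restrictOnePoint_toOnePoint [AddGroup R] [IsTopologicalAddGroup R] [R1Space X]
    (f : C₀(X, R)) : restrictOnePoint (toOnePoint f) = f := by
  ext; simp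

end OnePoint

@[simps]
def evalNonUnitalAlgHom {X R : Type*} [TopologicalSpace X] [CommSemiring R] [TopologicalSpace R]
    [IsTopologicalSemiring R] (x : X) : C₀(X, R) →ₙₐ[R] R where
  toFun f := f x
  map_smul' _ _ := rfl
  map_zero' := rfl
  map_add' _ _ := rfl
  map_mul' _ _ := rfl

lemma _root_.ContinuousMap.exists_forall_algHom_apply_eq {K 𝕜 : Type*} [TopologicalSpace K]
    [CompactSpace K] [T2Space K] [RCLike 𝕜] (φ : C(K, 𝕜) →ₐ[𝕜] 𝕜) : ∃ x, ∀ f, φ f = f x := by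
  obtain ⟨x, hx⟩ := (WeakDual.CharacterSpace.continuousMapEval_bijective K 𝕜).2
    (WeakDual.CharacterSpace.equivAlgHom.symm φ)
  exact ⟨x, fun f => (DFunLike.congr_fun hx f).symm⟩

variable {X Y 𝕜 : Type*} [TopologicalSpace X] [TopologicalSpace Y] [RCLike 𝕜]

theorem exists_forall_apply_eq_of_ne_zero [LocallyCompactSpace X] [T2Space X]
    (χ : C₀(X, 𝕜) →ₙₐ[𝕜] 𝕜) (hχ : χ ≠ 0) : ∃ x, ∀ f, χ f = f x := by
  obtain ⟨p, hp⟩ :=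
    ContinuousMap.exists_forall_algHom_apply_eq ((Unitization.lift χ).comp toUnitization)
  have hχp : ∀ f : C₀(X, 𝕜), χ f = toOnePoint f p := fun f => by
    simpa [toUnitization] using hp (toOnePoint f)
  induction p using OnePoint.rec with
  | infty => exact absurd (NonUnitalAlgHom.ext fun f => by simpa using hχp f) hχ
  | coe x => exact ⟨x, hχp⟩

theorem exists_apply_eq_one_of_mem_isOpen [LocallyCompactSpace X] [RegularSpace X] {U : Set X}
    (hU : IsOpen U) {x : X} (hx : x ∈ U) : ∃ f : C₀(X, 𝕜), f x = 1 ∧ ∀ x' ∉ U, f x' = 0 := by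
  obtain ⟨f, hf1, hf0, hfc, -⟩ := exists_continuous_one_zero_of_isCompact isCompact_singleton
    hU.isClosed_compl (Set.disjoint_singleton_left.2 (not_not.2 hx))
  have hfc' : HasCompactSupport fun x => (f x : 𝕜) := hfc.comp_left RCLike.ofReal_zero
  refine ⟨⟨⟨fun x => (f x : 𝕜), by fun_prop⟩, hfc'.is_zero_at_infty⟩, ?_, fun x' hx' => ?_⟩
  · simp [hf1 rfl]
  · simp [hf0 hx']

theorem eq_of_forall_apply_eq [LocallyCompactSpace X] [T2Space X] {x x' : X}
    (h : ∀ f : C₀(X, 𝕜), f x = f x') : x = x' := by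
  by_contra hne
  obtain ⟨f, hf1, hf0⟩ := exists_apply_eq_one_of_mem_isOpen (𝕜 := 𝕜) isOpen_ne hne
  simpa [hf1, hf0 x' (by simp)] using h f

theorem continuous_of_forall_continuous_comp [LocallyCompactSpace X] [RegularSpace X]
    {t : Y → X} (h : ∀ f : C₀(X, 𝕜), Continuous (f ∘ t)) : Continuous t := by
  refine continuous_def.2 fun U hU => isOpen_iff_forall_mem_open.2 fun y hy => ?_
  obtain ⟨f, hf1, hf0⟩ := exists_apply_eq_one_of_mem_isOpen (𝕜 := 𝕜) hU hy
  refine ⟨(f ∘ t) ⁻¹' {0}ᶜ, fun y' hy' => ?_, isOpen_compl_singleton.preimage (h f), by simp [hf1]⟩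
  by_contra hy''
  exact hy' (hf0 _ hy'')

theorem exists_eq_comp_of_surjective [LocallyCompactSpace X] [T2Space X] [LocallyCompactSpace Y]
    [RegularSpace Y] (φ : C₀(X, 𝕜) →ₙₐ[𝕜] C₀(Y, 𝕜)) (hφ : Function.Surjective φ) :
    ∃ t : C(Y, X), ∀ f y, φ f y = f (t y) := by
  have h : ∀ y, ∃ x, ∀ f, φ f y = f x := fun y => by
    refine exists_forall_apply_eq_of_ne_zero ((evalNonUnitalAlgHom y).comp φ) fun h0 => ?_
    obtain ⟨g, hg, -⟩ := exists_apply_eq_one_of_mem_isOpen (𝕜 := 𝕜) isOpen_univ (Set.mem_univ y)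
    obtain ⟨f, rfl⟩ := hφ g
    simpa [hg] using DFunLike.congr_fun h0 f
  choose t ht using h
  refine ⟨⟨t, continuous_of_forall_continuous_comp (𝕜 := 𝕜) fun f => ?_⟩, fun f y => ht y f⟩
  simpa only [Function.comp_def, ← ht] using map_continuous (φ f)

end ZeroAtInftyContinuousMap

open ZeroAtInftyContinuousMap in
/-- For locally compact Hausdorff spaces `X` and `Y`, the (non-unital) `ℂ`-algebras
`C₀(X, ℂ)` and `C₀(Y, ℂ)` are isomorphic as `ℂ`-algebras (i.e. there is a bijective
`ℂ`-linear ring isomorphism) if and only if `X` and `Y` are homeomorphic. -/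
theorem c0_alg_iso_iff_homeomorph
    (X Y : Type*) [TopologicalSpace X] [LocallyCompactSpace X] [T2Space X]
    [TopologicalSpace Y] [LocallyCompactSpace Y] [T2Space Y] :
    (∃ Φ : C₀(X, ℂ) ≃+* C₀(Y, ℂ), ∀ (c : ℂ) (f : C₀(X, ℂ)), Φ (c • f) = c • Φ f) ↔
      Nonempty (X ≃ₜ Y) := by
  constructor
  · rintro ⟨Φ, hΦ⟩
    let φ : C₀(X, ℂ) →ₙₐ[ℂ] C₀(Y, ℂ) := { Φ.toNonUnitalRingHom with map_smul' := hΦ }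
    let ψ : C₀(Y, ℂ) →ₙₐ[ℂ] C₀(X, ℂ) :=
      { Φ.symm.toNonUnitalRingHom with map_smul' := fun c g => Φ.injective (by simp [hΦ]) }
    obtain ⟨t, ht⟩ := exists_eq_comp_of_surjective φ Φ.surjective
    obtain ⟨s, hs⟩ := exists_eq_comp_of_surjective ψ Φ.symm.surjective
    refine ⟨{ toFun := s
              invFun := t
              left_inv x := eq_of_forall_apply_eq (𝕜 := ℂ) fun f => ?_
              right_inv y := eq_of_forall_apply_eq (𝕜 := ℂ) fun g => ?_
              continuous_toFun := s.continuous
              continuous_invFun := t.continuous }⟩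
    · rw [← ht, ← hs]
      simp [φ, ψ]
    · rw [← hs, ← ht]
      simp [φ, ψ]
  · rintro ⟨h⟩
    exact ⟨{ toFun f := f.comp h.symm.toCocompactMap
             invFun g := g.comp h.toCocompactMap
             left_inv f := by ext; simp
             right_inv g := by ext; simp
             map_mul' _ _ := rfl
             map_add' _ _ := rfl }, fun _ _ => rfl⟩
end

section
/- Let X and Y be locally compact Hausdorff topological spaces. Then every ℂ-algebra isomorphism Φ : C₀(X, ℂ) → C₀(Y, ℂ) is an isometry with respect to the supremum norms, i.e. ‖Φ f‖ = ‖f‖ for all f ∈ C₀(X, ℂ). -/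
/-!
An algebra isomorphism preserves quasispectra, and in a commutative C⋆-algebra every element is
normal, so its norm is the largest modulus of a point of its quasispectrum.
-/

open ZeroAtInfty

instance IsStarNormal.of_commSemigroup {R : Type*} [CommSemigroup R] [Star R] (x : R) :
    IsStarNormal x :=
  ⟨Commute.all _ _⟩

open NonUnitalIsometricContinuousFunctionalCalculus in
theorem norm_eq_of_quasispectrum_eq {A B : Type*} [NonUnitalCStarAlgebra A]
    [NonUnitalCStarAlgebra B] {a : A} {b : B} [IsStarNormal a] [IsStarNormal b]
    (h : quasispectrum ℂ b = quasispectrum ℂ a) : ‖b‖ = ‖a‖ :=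
  (isGreatest_norm_quasispectrum b).unique (h ▸ isGreatest_norm_quasispectrum a)

theorem RingEquiv.quasispectrum_apply_of_map_smul {R A B : Type*} [CommRing R]
    [NonUnitalRing A] [NonUnitalRing B] [Module R A] [Module R B] (e : A ≃+* B)
    (he : ∀ (c : R) (a : A), e (c • a) = c • e a) (a : A) :
    quasispectrum R (e a) = quasispectrum R a := by
  let φ : A →ₙₐ[R] B := { e.toNonUnitalRingHom with map_smul' := he }
  let ψ : B →ₙₐ[R] A :=
    { e.symm.toNonUnitalRingHom with
      map_smul' := fun c b => e.injective <| by simp [he] }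
  refine Set.Subset.antisymm (NonUnitalAlgHom.quasispectrum_apply_subset φ a) ?_
  simpa [ψ] using NonUnitalAlgHom.quasispectrum_apply_subset ψ (e a)

theorem c0_alg_iso_isometry_general
    (X Y : Type*) [TopologicalSpace X]
    [TopologicalSpace Y]
    (Φ : C₀(X, ℂ) ≃+* C₀(Y, ℂ)) (hΦ : ∀ (c : ℂ) (f : C₀(X, ℂ)), Φ (c • f) = c • Φ f)
    (f : C₀(X, ℂ)) : ‖Φ f‖ = ‖f‖ :=
  norm_eq_of_quasispectrum_eq (Φ.quasispectrum_apply_of_map_smul hΦ f)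

/-- For locally compact Hausdorff spaces `X` and `Y`, every `ℂ`-algebra isomorphism
(i.e. bijective `ℂ`-linear ring isomorphism) `Φ : C₀(X, ℂ) → C₀(Y, ℂ)` is an isometry
with respect to the supremum norms: `‖Φ f‖ = ‖f‖` for all `f`. -/
theorem c0_alg_iso_isometry
    (X Y : Type*) [TopologicalSpace X] [LocallyCompactSpace X] [T2Space X]
    [TopologicalSpace Y] [LocallyCompactSpace Y] [T2Space Y]
    (Φ : C₀(X, ℂ) ≃+* C₀(Y, ℂ)) (hΦ : ∀ (c : ℂ) (f : C₀(X, ℂ)), Φ (c • f) = c • Φ f)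
    (f : C₀(X, ℂ)) : ‖Φ f‖ = ‖f‖ :=
  c0_alg_iso_isometry_general X Y Φ hΦ f
end

section
/- Let X and Y be compact Hausdorff topological spaces. Then the algebras C(X, ℂ) and C(Y, ℂ) of continuous complex-valued functions are isomorphic as ℂ-algebras if and only if X and Y are homeomorphic. -/
/-!
A compact Hausdorff space `X` is recovered from `C(X, ℂ)` as its character space, via point
evaluations (`WeakDual.CharacterSpace.homeoEval`), and an algebra isomorphism transports characters
by precomposition.
-/

namespace WeakDual.CharacterSpace

variable {𝕜 A B : Type*} [NontriviallyNormedField 𝕜]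
  [NormedRing A] [NormedAlgebra 𝕜 A] [CompleteSpace A] [NormedRing B] [NormedAlgebra 𝕜 B]

noncomputable def compAlgHom (ψ : A →ₐ[𝕜] B) :
    C(characterSpace 𝕜 B, characterSpace 𝕜 A) where
  toFun χ := equivAlgHom.symm ((toAlgHom χ).comp ψ)
  continuous_toFun := .subtype_mk
    (continuous_of_continuous_eval fun a => (eval_continuous (ψ a)).comp continuous_subtype_val) _

@[simp]
theorem compAlgHom_apply (ψ : A →ₐ[𝕜] B) (χ : characterSpace 𝕜 B) (a : A) :
    compAlgHom ψ χ a = χ (ψ a) := rfl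

end WeakDual.CharacterSpace

namespace AlgEquiv

open WeakDual WeakDual.CharacterSpace

variable {𝕜 A B : Type*} [NontriviallyNormedField 𝕜]
  [NormedRing A] [NormedAlgebra 𝕜 A] [CompleteSpace A]
  [NormedRing B] [NormedAlgebra 𝕜 B] [CompleteSpace B]

noncomputable def characterSpaceHomeomorph (φ : A ≃ₐ[𝕜] B) :
    characterSpace 𝕜 A ≃ₜ characterSpace 𝕜 B where
  toFun := compAlgHom (φ.symm : B →ₐ[𝕜] A)
  invFun := compAlgHom (φ : A →ₐ[𝕜] B)
  left_inv χ := CharacterSpace.ext fun _ => by simp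
  right_inv χ := CharacterSpace.ext fun _ => by simp
  continuous_toFun := map_continuous _
  continuous_invFun := map_continuous _

end AlgEquiv

open WeakDual.CharacterSpace in
/-- For compact Hausdorff spaces `X` and `Y`, the `ℂ`-algebras `C(X, ℂ)` and `C(Y, ℂ)`
of continuous complex-valued functions are isomorphic as `ℂ`-algebras if and only if
`X` and `Y` are homeomorphic. -/
theorem continuousMap_alg_iso_iff_homeomorph
    (X Y : Type*) [TopologicalSpace X] [CompactSpace X] [T2Space X]
    [TopologicalSpace Y] [CompactSpace Y] [T2Space Y] :
    Nonempty (C(X, ℂ) ≃ₐ[ℂ] C(Y, ℂ)) ↔ Nonempty (X ≃ₜ Y) := by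
  constructor
  · rintro ⟨φ⟩
    exact ⟨(homeoEval X ℂ).trans <| φ.characterSpaceHomeomorph.trans (homeoEval Y ℂ).symm⟩
  · rintro ⟨f⟩
    exact ⟨(f.symm.compStarAlgEquiv' ℂ ℂ).toAlgEquiv⟩
end

section
/- Let X and Y be compact Hausdorff smooth manifolds without boundary, modeled on finite-dimensional Euclidean spaces. Then every ℝ-algebra isomorphism Ψ : C^∞(X, ℝ) → C^∞(Y, ℝ) preserves the supremum norm: ‖Ψ(f)‖_∞ = ‖f‖_∞ for all f ∈ C^∞(X, ℝ). -/
/-!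
A smooth function with no zero is invertible in the algebra of smooth functions, so the
spectrum of `f` there is its range, and `‖f‖_∞` is the supremum of `|λ|` over that spectrum.
Algebra isomorphisms preserve spectra.
-/

open Manifold

namespace ContMDiffMap

variable {𝕜 : Type*} [NontriviallyNormedField 𝕜]
  {E : Type*} [NormedAddCommGroup E] [NormedSpace 𝕜 E] {H : Type*} [TopologicalSpace H]
  {I : ModelWithCorners 𝕜 E H} {M : Type*} [TopologicalSpace M] [ChartedSpace H M]
  {n : WithTop ℕ∞}

theorem isUnit_iff_forall_ne_zero (f : C^n⟮I, M; 𝕜⟯) : IsUnit f ↔ ∀ x, f x ≠ 0 := by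
  constructor
  · rintro ⟨u, rfl⟩ x hx
    have hux : (u : C^n⟮I, M; 𝕜⟯) x * (↑u⁻¹ : C^n⟮I, M; 𝕜⟯) x = 1 :=
      DFunLike.congr_fun u.mul_inv x
    simp [hx] at hux
  · intro hf
    refine IsUnit.of_mul_eq_one ⟨fun x ↦ (f x)⁻¹, f.contMDiff.inv₀ hf⟩ ?_
    ext x
    exact mul_inv_cancel₀ (hf x)

theorem spectrum_eq_range (f : C^n⟮I, M; 𝕜⟯) : spectrum 𝕜 f = Set.range f := by
  ext a
  simp only [spectrum.mem_iff, isUnit_iff_forall_ne_zero, not_forall, not_not, Set.mem_range]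
  exact exists_congr fun x ↦ sub_eq_zero.trans eq_comm

theorem norm_eq_sSup_norm_image_spectrum [CompactSpace M] (f : C^n⟮I, M; 𝕜⟯) :
    ‖(⟨f, f.contMDiff.continuous⟩ : C(M, 𝕜))‖ = sSup (norm '' spectrum 𝕜 f) := by
  rw [spectrum_eq_range, ContinuousMap.norm_eq_iSup_norm, ← Set.range_comp]
  rfl

end ContMDiffMap

theorem algEquiv_smooth_functions_norm_preserving_general
    {n m : ℕ}
    {X : Type*} [TopologicalSpace X] [ChartedSpace (EuclideanSpace ℝ (Fin n)) X]
    [CompactSpace X]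
    {Y : Type*} [TopologicalSpace Y] [ChartedSpace (EuclideanSpace ℝ (Fin m)) Y]
    [CompactSpace Y]
    (Ψ : C^(⊤ : ℕ∞)⟮𝓡 n, X; ℝ⟯ ≃ₐ[ℝ] C^(⊤ : ℕ∞)⟮𝓡 m, Y; ℝ⟯)
    (f : C^(⊤ : ℕ∞)⟮𝓡 n, X; ℝ⟯) :
    ‖(⟨⇑(Ψ f), (Ψ f).contMDiff.continuous⟩ : C(Y, ℝ))‖ =
      ‖(⟨⇑f, f.contMDiff.continuous⟩ : C(X, ℝ))‖ := by
  rw [ContMDiffMap.norm_eq_sSup_norm_image_spectrum, ContMDiffMap.norm_eq_sSup_norm_image_spectrum,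
    AlgEquiv.spectrum_eq]

/-- For compact Hausdorff smooth manifolds `X` and `Y` without boundary, modeled on
finite-dimensional Euclidean spaces, every `ℝ`-algebra isomorphism
`Ψ : C^∞(X, ℝ) → C^∞(Y, ℝ)` preserves the supremum norm (the norm of the underlying
continuous map). -/
theorem algEquiv_smooth_functions_norm_preserving
    {n m : ℕ}
    {X : Type*} [TopologicalSpace X] [ChartedSpace (EuclideanSpace ℝ (Fin n)) X]
    [IsManifold (𝓡 n) (⊤ : ℕ∞) X] [T2Space X] [CompactSpace X]
    {Y : Type*} [TopologicalSpace Y] [ChartedSpace (EuclideanSpace ℝ (Fin m)) Y]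
    [IsManifold (𝓡 m) (⊤ : ℕ∞) Y] [T2Space Y] [CompactSpace Y]
    (Ψ : C^(⊤ : ℕ∞)⟮𝓡 n, X; ℝ⟯ ≃ₐ[ℝ] C^(⊤ : ℕ∞)⟮𝓡 m, Y; ℝ⟯)
    (f : C^(⊤ : ℕ∞)⟮𝓡 n, X; ℝ⟯) :
    ‖(⟨⇑(Ψ f), (Ψ f).contMDiff.continuous⟩ : C(Y, ℝ))‖ =
      ‖(⟨⇑f, f.contMDiff.continuous⟩ : C(X, ℝ))‖ :=
  algEquiv_smooth_functions_norm_preserving_general Ψ f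
end

section
/- Let X and Y be compact Hausdorff smooth manifolds without boundary modeled on finite-dimensional Euclidean spaces, and let Ψ : C^∞(X, ℝ) → C^∞(Y, ℝ) be an ℝ-algebra isomorphism. Then there exists a unique diffeomorphism ψ : Y → X such that Ψ(f) = f ∘ ψ for all f ∈ C^∞(X, ℝ). -/
/-!
A character `φ` of `C^∞(M)`, `M` compact, is evaluation at a point: otherwise each point is a
non-zero of some element of `ker φ`, and compactness gives a finite sum of squares of such
elements that vanishes nowhere, i.e. a unit in `ker φ`. Hence `Ψ` and `Ψ⁻¹` are composition with
maps `Y → X` and `X → Y`, which are mutually inverse, and unique, because smooth functions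
separate points. Such a map `p` is smooth because every `f ∘ p` is: near `y`, the chart at `p y`
agrees with its product by a bump function, a globally smooth map into the model space.
-/

open Manifold Set Function Filter
open scoped ContDiff

section

variable {E H M : Type*} [NormedAddCommGroup E] [NormedSpace ℝ E] [TopologicalSpace H]
  {I : ModelWithCorners ℝ E H} [TopologicalSpace M] [ChartedSpace H M]
  {E' H' N : Type*} [NormedAddCommGroup E'] [NormedSpace ℝ E'] [TopologicalSpace H']
  {J : ModelWithCorners ℝ E' H'} [TopologicalSpace N] [ChartedSpace H' N] {k : WithTop ℕ∞}

theorem ContMDiff.comp_of_forall_contMDiff_comp {F : Type*} [NormedAddCommGroup F]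
    [NormedSpace ℝ F] [FiniteDimensional ℝ F] {g : M → F} (hg : ContMDiff I 𝓘(ℝ, F) k g)
    {p : N → M} (hp : ∀ f : C^k⟮I, M; ℝ⟯, ContMDiff J 𝓘(ℝ) k (f ∘ p)) :
    ContMDiff J 𝓘(ℝ, F) k (g ∘ p) := by
  let e := (Module.finBasis ℝ F).equivFunL
  have hcoord : ContMDiff J 𝓘(ℝ, Fin _ → ℝ) k (e ∘ g ∘ p) :=
    contMDiff_pi_space.2 fun i => hp ⟨fun x => e (g x) i,
      ((ContinuousLinearMap.proj i).comp e.toContinuousLinearMap).contMDiff.comp hg⟩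
  simpa [comp_def] using e.symm.toContinuousLinearMap.contMDiff.comp hcoord

end

namespace ContMDiffMap

section Algebra

variable {E H M : Type*} [NormedAddCommGroup E] [NormedSpace ℝ E] [TopologicalSpace H]
  {I : ModelWithCorners ℝ E H} [TopologicalSpace M] [ChartedSpace H M] {k : WithTop ℕ∞}

theorem isUnit_of_forall_ne_zero {f : C^k⟮I, M; ℝ⟯} (hf : ∀ x, f x ≠ 0) : IsUnit f :=
  IsUnit.of_mul_eq_one ⟨fun x => (f x)⁻¹, f.contMDiff.inv₀ hf⟩ <| by
    ext x
    exact mul_inv_cancel₀ (hf x)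

theorem exists_forall_mem_apply_eq_zero [CompactSpace M] {J : Ideal C^k⟮I, M; ℝ⟯} (hJ : J ≠ ⊤) :
    ∃ x, ∀ f ∈ J, f x = 0 := by
  by_contra! h
  choose g hgJ hg using h
  obtain ⟨t, ht⟩ := isCompact_univ.elim_finite_subcover (fun x => {z | g x z ≠ 0})
    (fun x => isOpen_ne_fun (g x).contMDiff.continuous continuous_const)
    fun z _ => mem_iUnion.2 ⟨z, hg z⟩
  refine hJ <| J.eq_top_of_isUnit_mem (x := ∑ x ∈ t, g x * g x)
    (J.sum_mem fun x _ => J.mul_mem_left _ (hgJ x)) (isUnit_of_forall_ne_zero fun z => ?_)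
  obtain ⟨x, hxt, hx⟩ := mem_iUnion₂.1 (ht (mem_univ z))
  have hsum : (∑ i ∈ t, g i * g i) z = ∑ i ∈ t, g i z * g i z := by
    simpa using congrFun (map_sum coeFnAlgHom (fun i => g i * g i) t) z
  rw [hsum]
  exact (Finset.sum_pos' (fun i _ => mul_self_nonneg (g i z)) ⟨x, hxt, mul_self_pos.2 hx⟩).ne'

theorem exists_eq_eval_of_algHom [CompactSpace M] (φ : C^k⟮I, M; ℝ⟯ →ₐ[ℝ] ℝ) :
    ∃ x, ∀ f, φ f = f x := by
  obtain ⟨x, hx⟩ := exists_forall_mem_apply_eq_zero (RingHom.ker_ne_top φ)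
  refine ⟨x, fun f => ?_⟩
  have hfx : f x - φ f = 0 := by simpa using hx (f - φ f • 1) (by simp [RingHom.mem_ker])
  exact (sub_eq_zero.1 hfx).symm

theorem exists_eq_comp_of_algHom [CompactSpace M] {N : Type*}
    (Φ : C^k⟮I, M; ℝ⟯ →ₐ[ℝ] (N → ℝ)) : ∃ p : N → M, ∀ f, Φ f = f ∘ p := by
  choose p hp using fun y => exists_eq_eval_of_algHom ((Pi.evalAlgHom ℝ (fun _ => ℝ) y).comp Φ)
  exact ⟨p, fun f => funext fun y => hp y f⟩

end Algebra

section Geometry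

variable {E H M : Type*} [NormedAddCommGroup E] [NormedSpace ℝ E] [FiniteDimensional ℝ E]
  [TopologicalSpace H] {I : ModelWithCorners ℝ E H} [TopologicalSpace M] [ChartedSpace H M]
  [T2Space M] [IsManifold I ∞ M]

theorem eq_of_forall_apply_eq {x x' : M} (h : ∀ f : C^∞⟮I, M; ℝ⟯, f x = f x') : x = x' := by
  by_contra hne
  obtain ⟨f, hf⟩ :=
    (SmoothBumpFunction.nhds_basis_support (I := I) (isOpen_compl_singleton.mem_nhds hne)).ex_mem
  have hx' : f x' = 0 := image_eq_zero_of_notMem_tsupport fun hx' => hf hx' rfl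
  simpa [f.eq_one, hx'] using h ⟨f, f.contMDiff⟩

theorem continuous_of_forall_continuous_comp {N : Type*} [TopologicalSpace N] {p : N → M}
    (hp : ∀ f : C^∞⟮I, M; ℝ⟯, Continuous (f ∘ p)) : Continuous p := by
  refine continuous_iff_continuousAt.2 fun y s hs => ?_
  obtain ⟨f, hf⟩ := (SmoothBumpFunction.nhds_basis_support (I := I) hs).ex_mem
  have hopen : IsOpen {z | f (p z) ≠ 0} := isOpen_ne_fun (hp ⟨f, f.contMDiff⟩) continuous_const
  exact mem_of_superset (hopen.mem_nhds (by simp)) fun z hz => hf (subset_tsupport _ hz)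

variable {E' H' N : Type*} [NormedAddCommGroup E'] [NormedSpace ℝ E'] [TopologicalSpace H']
  {J : ModelWithCorners ℝ E' H'} [TopologicalSpace N] [ChartedSpace H' N]

theorem contMDiff_of_forall_contMDiff_comp {p : N → M}
    (hp : ∀ f : C^∞⟮I, M; ℝ⟯, ContMDiff J 𝓘(ℝ) ∞ (f ∘ p)) : ContMDiff J I ∞ p := by
  have hcont : Continuous p := continuous_of_forall_continuous_comp fun f => (hp f).continuous
  intro y
  obtain ⟨f⟩ : Nonempty (SmoothBumpFunction I (p y)) := inferInstance
  have hg : ContMDiff I 𝓘(ℝ, E) ∞ fun x => f x • extChartAt I (p y) x :=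
    f.contMDiff_smul contMDiffOn_extChartAt
  refine contMDiffAt_iff_target.2 ⟨hcont.continuousAt,
    ((hg.comp_of_forall_contMDiff_comp hp) y).congr_of_eventuallyEq ?_⟩
  filter_upwards [hcont.continuousAt.eventually f.eventuallyEq_one] with z hz
  simp [hz]

theorem exists_contMDiffMap_eq_comp_of_algHom [CompactSpace M]
    (Φ : C^∞⟮I, M; ℝ⟯ →ₐ[ℝ] C^∞⟮J, N; ℝ⟯) : ∃ p : C^∞⟮J, N; I, M⟯, ∀ f, ⇑(Φ f) = f ∘ p := by
  obtain ⟨p, hp⟩ := exists_eq_comp_of_algHom (coeFnAlgHom.comp Φ)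
  exact ⟨⟨p, contMDiff_of_forall_contMDiff_comp fun f => hp f ▸ (Φ f).contMDiff⟩, hp⟩

theorem leftInverse_of_eq_comp {Φ : C^∞⟮J, N; ℝ⟯ → C^∞⟮I, M; ℝ⟯}
    {Φ' : C^∞⟮I, M; ℝ⟯ → C^∞⟮J, N; ℝ⟯} (hΦ : ∀ g, Φ (Φ' g) = g) {p : M → N} {q : N → M}
    (hp : ∀ f, ⇑(Φ f) = f ∘ p) (hq : ∀ g, ⇑(Φ' g) = g ∘ q) : LeftInverse q p := fun x =>
  eq_of_forall_apply_eq fun g =>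
    calc g (q (p x)) = Φ' g (p x) := (congrFun (hq g) (p x)).symm
      _ = Φ (Φ' g) x := (congrFun (hp _) x).symm
      _ = g x := by rw [hΦ]

end Geometry

end ContMDiffMap

/-- For compact Hausdorff smooth manifolds `X` and `Y` without boundary, modeled on
finite-dimensional Euclidean spaces, every `ℝ`-algebra isomorphism
`Ψ : C^∞(X, ℝ) → C^∞(Y, ℝ)` is given by composition with a unique diffeomorphism
`ψ : Y → X`. -/
theorem algEquiv_smooth_functions_eq_comp_diffeomorph_of_compact
    {n m : ℕ}
    {X : Type*} [TopologicalSpace X] [ChartedSpace (EuclideanSpace ℝ (Fin n)) X]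
    [IsManifold (𝓡 n) (⊤ : ℕ∞) X] [T2Space X] [CompactSpace X]
    {Y : Type*} [TopologicalSpace Y] [ChartedSpace (EuclideanSpace ℝ (Fin m)) Y]
    [IsManifold (𝓡 m) (⊤ : ℕ∞) Y] [T2Space Y] [CompactSpace Y]
    (Ψ : C^(⊤ : ℕ∞)⟮𝓡 n, X; ℝ⟯ ≃ₐ[ℝ] C^(⊤ : ℕ∞)⟮𝓡 m, Y; ℝ⟯) :
    ∃! ψ : Diffeomorph (𝓡 m) (𝓡 n) Y X (⊤ : ℕ∞), ∀ f : C^(⊤ : ℕ∞)⟮𝓡 n, X; ℝ⟯, ⇑(Ψ f) = f ∘ ψ := by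
  obtain ⟨p, hp⟩ := ContMDiffMap.exists_contMDiffMap_eq_comp_of_algHom Ψ.toAlgHom
  obtain ⟨q, hq⟩ := ContMDiffMap.exists_contMDiffMap_eq_comp_of_algHom Ψ.symm.toAlgHom
  have hqp := ContMDiffMap.leftInverse_of_eq_comp Ψ.apply_symm_apply hp hq
  have hpq := ContMDiffMap.leftInverse_of_eq_comp Ψ.symm_apply_apply hq hp
  refine ⟨⟨⟨p, q, hqp, hpq⟩, p.contMDiff, q.contMDiff⟩, hp, fun ψ hψ => Diffeomorph.ext fun y => ?_⟩
  exact ContMDiffMap.eq_of_forall_apply_eq fun f =>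
    (congrFun (hψ f) y).symm.trans (congrFun (hp f) y)
end

section
/- Let r : (0,1] → ℝ be smooth and moderate, and let S ⊆ (0,1] with 0 ∈ closure(S). Then r is strictly non-zero on S (i.e. there exist m ∈ ℕ and ε₀ > 0 such that |r(ε)| > ε^m for all ε ∈ S with ε < ε₀) if and only if r admits an S-inverse, i.e. there exists a smooth moderate function s : (0,1] → ℝ such that r·s − 1 is negligible on S (for every m ∈ ℕ there exists ε₀ > 0 such that |r(ε)s(ε) − 1| ≤ ε^m for all ε ∈ S with ε < ε₀). -/
open Set

set_option maxHeartbeats 1000000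

/-- Let `r : (0,1] → ℝ` be smooth and moderate, and let `S ⊆ (0,1]` with `0 ∈ closure S`.
Then `r` is strictly non-zero on `S` (there are `m ∈ ℕ` and `ε₀ > 0` with `|r ε| > ε ^ m`
for all `ε ∈ S` with `ε < ε₀`) if and only if `r` admits an `S`-inverse: a smooth moderate
`s : (0,1] → ℝ` such that `r * s - 1` is negligible on `S`. -/
theorem strictly_nonzero_on_iff_S_invertible
    (r : ℝ → ℝ) (hr_smooth : ContDiffOn ℝ (⊤ : ℕ∞) r (Ioc (0 : ℝ) 1))
    (hr_moderate : ∃ N : ℕ, ∃ ε₀ > (0 : ℝ), ∀ ε : ℝ, 0 < ε → ε < ε₀ →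
      |r ε| ≤ ε ^ (-(N : ℤ)))
    (S : Set ℝ) (hS : S ⊆ Ioc (0 : ℝ) 1) (h0 : (0 : ℝ) ∈ closure S) :
    (∃ m : ℕ, ∃ ε₀ > (0 : ℝ), ∀ ε ∈ S, ε < ε₀ → ε ^ m < |r ε|) ↔
      (∃ s : ℝ → ℝ, ContDiffOn ℝ (⊤ : ℕ∞) s (Ioc (0 : ℝ) 1) ∧
        (∃ N : ℕ, ∃ ε₀ > (0 : ℝ), ∀ ε : ℝ, 0 < ε → ε < ε₀ →
          |s ε| ≤ ε ^ (-(N : ℤ))) ∧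
        (∀ m : ℕ, ∃ ε₀ > (0 : ℝ), ∀ ε ∈ S, ε < ε₀ → |r ε * s ε - 1| ≤ ε ^ m)) := by
  constructor
  · rintro ⟨m, ε₀, hε₀, hm⟩
    set k : ℕ := m + 1 with hk
    set s : ℝ → ℝ := fun ε => r ε * (1 - Real.exp (-(r ε ^ 2) / ε ^ (2 * k))) /
        (r ε ^ 2 + ε ^ (2 * k) * Real.exp (-(r ε ^ 2) / ε ^ (2 * k))) with hs
    -- denominator positivity
    have hD : ∀ ε : ℝ, 0 < ε →
        0 < r ε ^ 2 + ε ^ (2 * k) * Real.exp (-(r ε ^ 2) / ε ^ (2 * k)) := by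
      intro ε hε
      have h1 : (0:ℝ) < ε ^ (2 * k) := pow_pos hε _
      positivity
    refine ⟨s, ?_, ?_, ?_⟩
    · -- analyticity
      have hpow : ContDiffOn ℝ (⊤ : ℕ∞) (fun ε : ℝ => ε ^ (2 * k)) (Ioc (0:ℝ) 1) :=
        (contDiff_id.pow _).contDiffOn
      have hpne : ∀ ε ∈ Ioc (0:ℝ) 1, ε ^ (2 * k) ≠ 0 := fun ε hε =>
        (pow_pos hε.1 _).ne'
      have hexp : ContDiffOn ℝ (⊤ : ℕ∞)
          (fun ε : ℝ => Real.exp (-(r ε ^ 2) / ε ^ (2 * k))) (Ioc (0:ℝ) 1) :=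
        (((hr_smooth.pow 2).neg.div hpow hpne)).exp
      exact ((hr_smooth.mul (contDiffOn_const.sub hexp)).div
        ((hr_smooth.pow 2).add (hpow.mul hexp))
        (fun ε hε => (hD ε hε.1).ne'))
    · -- moderateness
      refine ⟨k + 1, 1/2, by norm_num, ?_⟩
      intro ε hε hε2
      set x := r ε with hx
      set E := Real.exp (-(x ^ 2) / ε ^ (2 * k)) with hE
      have hq : (0:ℝ) < ε ^ k := pow_pos hε _
      have hP : ε ^ (2 * k) = (ε ^ k) ^ 2 := by rw [← pow_mul, mul_comm]
      have hP0 : (0:ℝ) < ε ^ (2 * k) := pow_pos hε _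
      have hE0 : 0 < E := Real.exp_pos _
      have hE1 : E ≤ 1 := by
        apply Real.exp_le_one_iff.mpr
        apply div_nonpos_of_nonpos_of_nonneg (neg_nonpos.mpr (sq_nonneg x)) hP0.le
      have hE2 : (1 - E) * (ε ^ k) ^ 2 ≤ x ^ 2 := by
        have h := Real.add_one_le_exp (-(x ^ 2) / ε ^ (2 * k))
        rw [← hE] at h
        have h2 : 1 - x ^ 2 / (ε ^ k) ^ 2 ≤ E := by
          rw [← hP]; rw [neg_div] at h; linarith
        have h3 : (0:ℝ) < (ε ^ k) ^ 2 := by positivity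
        calc (1 - E) * (ε ^ k) ^ 2 ≤ (x ^ 2 / (ε ^ k) ^ 2) * (ε ^ k) ^ 2 := by
              apply mul_le_mul_of_nonneg_right _ h3.le
              linarith
          _ = x ^ 2 := by field_simp
      have hDpos : 0 < x ^ 2 + ε ^ (2 * k) * E := hD ε hε
      have habs : |s ε| = |x| * (1 - E) / (x ^ 2 + ε ^ (2 * k) * E) := by
        have h1 : s ε = x * (1 - E) / (x ^ 2 + ε ^ (2 * k) * E) := rfl
        rw [h1, abs_div, abs_mul, abs_of_nonneg (sub_nonneg.mpr hE1), abs_of_pos hDpos]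
      have key : ε ^ (k + 1) * (|x| * (1 - E)) ≤ x ^ 2 := by
        have hax : 0 ≤ |x| := abs_nonneg x
        have hx2 : |x| ^ 2 = x ^ 2 := sq_abs x
        have hεk1 : ε ^ (k + 1) = ε ^ k * ε := pow_succ ε k
        have habs2 : |x| * |x| = x ^ 2 := by rw [← sq_abs x]; ring
        rcases le_total (|x|) (ε ^ k) with h1 | h1
        · have c1 : |x| * (1 - E) * ε ^ k ≤ x ^ 2 := by
            have s1 : |x| * ((1 - E) * (ε ^ k) ^ 2) ≤ |x| * x ^ 2 :=
              mul_le_mul_of_nonneg_left hE2 hax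
            have s2 : |x| * x ^ 2 ≤ ε ^ k * x ^ 2 :=
              mul_le_mul_of_nonneg_right h1 (sq_nonneg x)
            have s3 : (|x| * (1 - E) * ε ^ k) * ε ^ k ≤ x ^ 2 * ε ^ k := by nlinarith
            exact le_of_mul_le_mul_right s3 hq
          have c2 : (|x| * (1 - E) * ε ^ k) * ε ≤ x ^ 2 * ε :=
            mul_le_mul_of_nonneg_right c1 hε.le
          have c3 : x ^ 2 * ε ≤ x ^ 2 := by nlinarith [sq_nonneg x]
          calc ε ^ (k + 1) * (|x| * (1 - E)) = (|x| * (1 - E) * ε ^ k) * ε := by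
                rw [hεk1]; ring
            _ ≤ x ^ 2 * ε := c2
            _ ≤ x ^ 2 := c3
        · have h2 : ε ^ (k + 1) ≤ ε ^ k :=
            pow_le_pow_of_le_one hε.le (by linarith) (by omega)
          have c1 : |x| * (1 - E) ≤ |x| :=
            mul_le_of_le_one_right hax (by linarith)
          have c3 : ε ^ (k + 1) * (|x| * (1 - E)) ≤ ε ^ k * |x| :=
            mul_le_mul h2 c1 (mul_nonneg hax (by linarith)) (pow_nonneg hε.le k)
          have c4 : ε ^ k * |x| ≤ |x| * |x| := mul_le_mul_of_nonneg_right h1 hax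
          linarith
      have hzpow : (ε : ℝ) ^ (-((k + 1 : ℕ) : ℤ)) = (ε ^ (k + 1))⁻¹ := by
        rw [zpow_neg, zpow_natCast]
      have hε1pos : (0:ℝ) < ε ^ (k + 1) := pow_pos hε _
      rw [habs, hzpow, div_le_iff₀ hDpos]
      rw [← le_div_iff₀' hε1pos] at key
      calc |x| * (1 - E) ≤ x ^ 2 / ε ^ (k + 1) := key
        _ = (ε ^ (k + 1))⁻¹ * x ^ 2 := by ring
        _ ≤ (ε ^ (k + 1))⁻¹ * (x ^ 2 + ε ^ (2 * k) * E) := by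
            apply mul_le_mul_of_nonneg_left _ (by positivity)
            nlinarith [mul_pos hP0 hE0]
    · -- negligibility on S
      intro j
      have htt := Real.tendsto_pow_mul_exp_neg_atTop_nhds_zero j
      have hev : ∀ᶠ y in Filter.atTop, y ^ j * Real.exp (-y) ≤ 1/2 :=
        htt.eventually (eventually_le_nhds (by norm_num : (0:ℝ) < 1/2))
      obtain ⟨M, hM⟩ := Filter.eventually_atTop.mp hev
      have hM1 : (0:ℝ) < max M 1 := lt_of_lt_of_le one_pos (le_max_right _ _)
      refine ⟨min ε₀ (max M 1)⁻¹, lt_min hε₀ (by positivity), ?_⟩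
      intro ε hεS hεlt
      obtain ⟨hε, hε1⟩ := hS hεS
      have hεε₀ : ε < ε₀ := lt_of_lt_of_le hεlt (min_le_left _ _)
      have hεM : ε < (max M 1)⁻¹ := lt_of_lt_of_le hεlt (min_le_right _ _)
      have hrε := hm ε hεS hεε₀
      set x := r ε with hx
      set E := Real.exp (-(x ^ 2) / ε ^ (2 * k)) with hE
      have hP0 : (0:ℝ) < ε ^ (2 * k) := pow_pos hε _
      have hDpos : 0 < x ^ 2 + ε ^ (2 * k) * E := hD ε hε
      have hE0 : 0 < E := Real.exp_pos _
      have hεm : (0:ℝ) < ε ^ m := pow_pos hε _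
      have hx2 : ε ^ (2 * m) < x ^ 2 := by
        have hpm : ε ^ (2 * m) = (ε ^ m) ^ 2 := by rw [← pow_mul, mul_comm]
        rw [hpm, ← sq_abs x]
        exact pow_lt_pow_left₀ hrε hεm.le (by norm_num)
      have hx2pos : (0:ℝ) < x ^ 2 := lt_of_le_of_lt (by positivity) hx2
      set u := x ^ 2 / ε ^ (2 * k) with hu
      have hupos : 0 < u := div_pos hx2pos hP0
      have h2k : ε ^ (2 * k) = ε ^ 2 * ε ^ (2 * m) := by
        rw [← pow_add]; congr 1; omega
      have key2 : ε ^ (2 * k) ≤ ε * x ^ 2 := by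
        rw [h2k]
        nlinarith [mul_le_mul_of_nonneg_left hx2.le (mul_nonneg hε.le hε.le),
          pow_pos hε (2*m), sq_nonneg ε]
      have hεinv : max M 1 ≤ ε⁻¹ := by
        rw [← one_div]
        rw [le_div_iff₀ hε]
        have h := mul_lt_mul_of_pos_right hεM hM1
        rw [inv_mul_cancel₀ hM1.ne'] at h
        linarith
      have huM : M ≤ u := by
        have h1 : ε⁻¹ ≤ u := by
          rw [hu, le_div_iff₀ hP0, inv_mul_le_iff₀ hε]
          calc ε ^ (2 * k) ≤ ε * x ^ 2 := key2
            _ = ε * x ^ 2 := rfl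
        calc M ≤ max M 1 := le_max_left _ _
          _ ≤ ε⁻¹ := hεinv
          _ ≤ u := h1
      have hMu : u ^ j * Real.exp (-u) ≤ 1/2 := hM u huM
      have hEu : E = Real.exp (-u) := by rw [hE, hu, neg_div]
      have h4 : 1 ≤ ε ^ 2 * u := by
        rw [hu, mul_div_assoc', one_le_div hP0, h2k]
        nlinarith [sq_nonneg ε]
      have h5 : 1 ≤ (ε ^ 2 * u) ^ j := one_le_pow₀ h4
      have hE' : E ≤ (1/2) * ε ^ (2 * j) := by
        have h6 : E ≤ E * ((ε ^ 2 * u) ^ j) := le_mul_of_one_le_right hE0.le h5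
        have h7 : E * ((ε ^ 2 * u) ^ j) = (u ^ j * Real.exp (-u)) * ε ^ (2 * j) := by
          rw [hEu, mul_pow, ← pow_mul, mul_comm 2 j, pow_mul, ← pow_mul, mul_comm j 2]
          ring
        rw [h7] at h6
        calc E ≤ (u ^ j * Real.exp (-u)) * ε ^ (2 * j) := h6
          _ ≤ (1/2) * ε ^ (2 * j) :=
            mul_le_mul_of_nonneg_right hMu (by positivity)
      have hrs1 : x * s ε - 1 = -(E * (x ^ 2 + ε ^ (2 * k))) / (x ^ 2 + ε ^ (2 * k) * E) := by
        have h1 : s ε = x * (1 - E) / (x ^ 2 + ε ^ (2 * k) * E) := rfl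
        rw [h1]
        field_simp
        ring
      have hnum : (0:ℝ) ≤ E * (x ^ 2 + ε ^ (2 * k)) := by positivity
      rw [hrs1, abs_div, abs_neg, abs_of_nonneg hnum, abs_of_pos hDpos,
        div_le_iff₀ hDpos]
      have hjj : ε ^ (2 * j) ≤ ε ^ j := pow_le_pow_of_le_one hε.le hε1 (by omega)
      have hek : ε ^ (2 * k) ≤ x ^ 2 := by
        calc ε ^ (2 * k) ≤ ε * x ^ 2 := key2
          _ ≤ 1 * x ^ 2 := by nlinarith
          _ = x ^ 2 := one_mul _
      have hεj : (0:ℝ) < ε ^ j := pow_pos hε _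
      calc E * (x ^ 2 + ε ^ (2 * k)) ≤ E * (2 * x ^ 2) :=
            mul_le_mul_of_nonneg_left (by linarith) hE0.le
        _ = 2 * x ^ 2 * E := by ring
        _ ≤ 2 * x ^ 2 * ((1/2) * ε ^ (2 * j)) :=
            mul_le_mul_of_nonneg_left hE' (by positivity)
        _ = x ^ 2 * ε ^ (2 * j) := by ring
        _ ≤ x ^ 2 * ε ^ j := mul_le_mul_of_nonneg_left hjj hx2pos.le
        _ = ε ^ j * x ^ 2 := by ring
        _ ≤ ε ^ j * (x ^ 2 + ε ^ (2 * k) * E) := by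
            apply mul_le_mul_of_nonneg_left _ hεj.le
            nlinarith [mul_pos hP0 hE0]
  · rintro ⟨s, _, ⟨N, ε₁, hε₁, hN⟩, hneg⟩
    obtain ⟨ε₂, hε₂, h2⟩ := hneg 1
    refine ⟨N + 1, min (min ε₁ ε₂) (1/2), by positivity, ?_⟩
    intro ε hεS hεlt
    obtain ⟨hε, hε1⟩ := hS hεS
    have hεe1 : ε < ε₁ := lt_of_lt_of_le hεlt ((min_le_left _ _).trans (min_le_left _ _))
    have hεe2 : ε < ε₂ := lt_of_lt_of_le hεlt ((min_le_left _ _).trans (min_le_right _ _))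
    have hεh : ε < 1/2 := lt_of_lt_of_le hεlt (min_le_right _ _)
    have hsb := hN ε hε hεe1
    have hrs := h2 ε hεS hεe2
    rw [pow_one] at hrs
    have hzpow : (ε : ℝ) ^ (-(N : ℤ)) = (ε ^ N)⁻¹ := by rw [zpow_neg, zpow_natCast]
    rw [hzpow] at hsb
    have hεN : (0:ℝ) < ε ^ N := pow_pos hε _
    have h3 : 1 - ε ≤ |r ε * s ε| := by
      have h := abs_sub_abs_le_abs_sub (r ε * s ε) 1
      rw [abs_one] at h
      have h' := abs_sub_abs_le_abs_sub 1 (r ε * s ε)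
      rw [abs_one, abs_sub_comm] at h'
      linarith
    have h4 : 1/2 ≤ |r ε| * |s ε| := by rw [← abs_mul]; linarith
    have hs0 : 0 < |s ε| := by
      by_contra h
      push_neg at h
      have h' : |s ε| = 0 := le_antisymm h (abs_nonneg _)
      rw [h', mul_zero] at h4; linarith
    have h5 : 1/2 ≤ |r ε| * (ε ^ N)⁻¹ :=
      le_trans h4 (mul_le_mul_of_nonneg_left hsb (abs_nonneg _))
    have h6 : ε ^ N / 2 ≤ |r ε| := by
      have h := mul_le_mul_of_nonneg_right h5 hεN.le
      rw [mul_assoc, inv_mul_cancel₀ hεN.ne', mul_one] at h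
      linarith
    calc ε ^ (N + 1) = ε ^ N * ε := pow_succ ε N
      _ < ε ^ N * (1/2) := by nlinarith
      _ ≤ |r ε| := by linarith
end
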